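/- Let G be a finite connected simple graph and κ_0 > 0. With I_{κ_0} = ∑_{xy∈E} max{0, κ_0 − κ_LLY(x,y)}, the diameter of G satisfies Diam(G) ≤ ⌊(2 + I_{κ_0})/κ_0⌋. -/

import Mathlib

open Finset

/-- A probability measure on a finite set, given as a density. -/
def IsProbMeasure {V : Type*} [Fintype V] (m : V → ℝ) : Prop :=
  (∀ x, 0 ≤ m x) ∧ ∑ x, m x = 1

/-- A coupling between two probability measures on a finite set. -/
def IsCoupling {V : Type*} [Fintype V] (A : V × V → ℝ) (m₁ m₂ : V → ℝ) : Prop :=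
  (∀ p, 0 ≤ A p) ∧ (∀ x, ∑ y, A (x, y) = m₁ x) ∧ (∀ y, ∑ x, A (x, y) = m₂ y)

/-- The Wasserstein-1 (transportation) distance between two probability measures on a
finite set, with respect to a cost `d`. -/
noncomputable def W {V : Type*} [Fintype V] (d : V → V → ℝ) (m₁ m₂ : V → ℝ) : ℝ :=
  sInf {c | ∃ A, IsCoupling A m₁ m₂ ∧ c = ∑ p : V × V, A p * d p.1 p.2}

lemma W_symm {V : Type*} [Fintype V] (d : V → V → ℝ) (hd : ∀ x y, d x y = d y x)
    (m₁ m₂ : V → ℝ) : W d m₁ m₂ = W d m₂ m₁ := by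
  have key : ∀ m₁ m₂ : V → ℝ,
      {c | ∃ A, IsCoupling A m₁ m₂ ∧ c = ∑ p : V × V, A p * d p.1 p.2} ⊆
      {c | ∃ A, IsCoupling A m₂ m₁ ∧ c = ∑ p : V × V, A p * d p.1 p.2} := by
    rintro m₁ m₂ c ⟨A, ⟨h0, h1, h2⟩, rfl⟩
    refine ⟨fun p => A (p.2, p.1), ⟨fun p => h0 _, fun x => h2 x, fun y => h1 y⟩, ?_⟩
    refine Fintype.sum_equiv (Equiv.prodComm V V) _ _ ?_
    intro p
    simp [Equiv.prodComm, hd p.1 p.2]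
  unfold W
  congr 1
  exact Set.Subset.antisymm (key m₁ m₂) (key m₂ m₁)

/-- The `α`-lazy random walk measure at a vertex `x` of a graph. -/
noncomputable def lazyWalk {V : Type*} [Fintype V] [DecidableEq V] (G : SimpleGraph V)
    [DecidableRel G.Adj] (α : ℝ) (x : V) : V → ℝ :=
  fun v => if v = x then α else if G.Adj x v then (1 - α) / (G.degree x) else 0

/-- The `α`-Ricci curvature `κ_α(x,y) = 1 - W(m_x^α, m_y^α)/d(x,y)`. -/
noncomputable def kappaAlpha {V : Type*} [Fintype V] [DecidableEq V] (G : SimpleGraph V)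
    [DecidableRel G.Adj] (α : ℝ) (x y : V) : ℝ :=
  1 - W (fun a b => (G.dist a b : ℝ)) (lazyWalk G α x) (lazyWalk G α y) / (G.dist x y)

lemma kappaAlpha_symm {V : Type*} [Fintype V] [DecidableEq V] (G : SimpleGraph V)
    [DecidableRel G.Adj] (α : ℝ) (x y : V) :
    kappaAlpha G α x y = kappaAlpha G α y x := by
  unfold kappaAlpha
  rw [W_symm _ (fun a b => by rw [SimpleGraph.dist_comm]),
    SimpleGraph.dist_comm]

/-- The Lin–Lu–Yau Ricci curvature `κ_LLY(x,y) = lim_{α → 1⁻} κ_α(x,y)/(1-α)`. -/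
noncomputable def kappaLLY {V : Type*} [Fintype V] [DecidableEq V] (G : SimpleGraph V)
    [DecidableRel G.Adj] (x y : V) : ℝ :=
  Filter.limUnder (nhdsWithin 1 (Set.Ico (0:ℝ) 1)) (fun α => kappaAlpha G α x y / (1 - α))

lemma kappaLLY_symm {V : Type*} [Fintype V] [DecidableEq V] (G : SimpleGraph V)
    [DecidableRel G.Adj] (x y : V) : kappaLLY G x y = kappaLLY G y x := by
  unfold kappaLLY
  congr 1
  funext α
  rw [kappaAlpha_symm]

/-- Integral `α`-Ricci curvature `I^α_{κ₀}`: total amount of `α`-Ricci curvature below the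
threshold `(1-α)κ₀`, summed over the edges of `G`. -/
noncomputable def IAlpha {V : Type*} [Fintype V] [DecidableEq V] (G : SimpleGraph V)
    [DecidableRel G.Adj] (α κ₀ : ℝ) : ℝ :=
  ∑ e ∈ G.edgeFinset,
    Sym2.lift ⟨fun x y => max 0 ((1 - α) * κ₀ - kappaAlpha G α x y),
      fun x y => by simp only []; rw [kappaAlpha_symm]⟩ e

/-- Integral Lin–Lu–Yau Ricci curvature `I_{κ₀}`: total amount of Lin–Lu–Yau Ricci curvature
below the threshold `κ₀`, summed over the edges of `G`. -/
noncomputable def ILLY {V : Type*} [Fintype V] [DecidableEq V] (G : SimpleGraph V)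
    [DecidableRel G.Adj] (κ₀ : ℝ) : ℝ :=
  ∑ e ∈ G.edgeFinset,
    Sym2.lift ⟨fun x y => max 0 (κ₀ - kappaLLY G x y),
      fun x y => by simp only []; rw [kappaLLY_symm]⟩ e

/-- The diameter of a finite graph. -/
noncomputable def gDiam {V : Type*} [Fintype V] (G : SimpleGraph V) : ℕ :=
  Finset.univ.sup fun p : V × V => G.dist p.1 p.2

/-! Along a geodesic `x = v₀, …, v_L = y`, test the dual formulation of `W` on each edge with
the 1-Lipschitz function `f = d(x, ·)`: `κ_α(vᵢ, vᵢ₊₁) ≤ 1 - (E_{m_{vᵢ₊₁}} f - E_{m_{vᵢ}} f)`.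
Summing telescopes, and `E_{m_x} f = 1 - α`, `E_{m_y} f ≥ L - (1 - α)`, so
`L (1 - α) κ₀ - 2 (1 - α) ≤ I^α_{κ₀}`. Dividing by `1 - α` and letting `α → 1` gives
`L κ₀ - 2 ≤ I_{κ₀}`; the limit exists because `κ_α / (1 - α)` is nondecreasing in `α` and at
most `2` on edges. -/

open Filter Topology

section Transport

variable {V : Type*} [Fintype V]

lemma IsCoupling.sum_mul_fst {A : V × V → ℝ} {m₁ m₂ : V → ℝ} (hA : IsCoupling A m₁ m₂)
    (f : V → ℝ) : ∑ p : V × V, A p * f p.1 = ∑ x, m₁ x * f x := by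
  simp only [Fintype.sum_prod_type, ← sum_mul, hA.2.1]

lemma IsCoupling.sum_mul_snd {A : V × V → ℝ} {m₁ m₂ : V → ℝ} (hA : IsCoupling A m₁ m₂)
    (f : V → ℝ) : ∑ p : V × V, A p * f p.2 = ∑ y, m₂ y * f y := by
  simp only [Fintype.sum_prod_type_right, ← sum_mul, hA.2.2]

lemma IsProbMeasure.isCoupling_mul {m₁ m₂ : V → ℝ} (h₁ : IsProbMeasure m₁)
    (h₂ : IsProbMeasure m₂) : IsCoupling (fun p => m₁ p.1 * m₂ p.2) m₁ m₂ :=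
  ⟨fun p => mul_nonneg (h₁.1 _) (h₂.1 _), fun x => by simp only [← mul_sum, h₂.2, mul_one],
    fun y => by simp only [← sum_mul, h₁.2, one_mul]⟩

lemma isProbMeasure_single [DecidableEq V] (x : V) : IsProbMeasure (Pi.single x (1 : ℝ)) :=
  ⟨fun v => by by_cases h : v = x <;> simp [h], by simp⟩

lemma IsCoupling.convexComb {A B : V × V → ℝ} {m₁ m₂ n₁ n₂ : V → ℝ}
    (hA : IsCoupling A m₁ m₂) (hB : IsCoupling B n₁ n₂) {l : ℝ} (hl₀ : 0 ≤ l) (hl₁ : l ≤ 1) :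
    IsCoupling (fun p => l * A p + (1 - l) * B p)
      (fun x => l * m₁ x + (1 - l) * n₁ x) (fun y => l * m₂ y + (1 - l) * n₂ y) :=
  ⟨fun p => add_nonneg (mul_nonneg hl₀ (hA.1 p)) (mul_nonneg (sub_nonneg.2 hl₁) (hB.1 p)),
    fun x => by simp only [sum_add_distrib, ← mul_sum, hA.2.1, hB.2.1],
    fun y => by simp only [sum_add_distrib, ← mul_sum, hA.2.2, hB.2.2]⟩

variable {d : V → V → ℝ} {m₁ m₂ : V → ℝ}

lemma W_le_of_isCoupling (hd : ∀ a b, 0 ≤ d a b) {A : V × V → ℝ} (hA : IsCoupling A m₁ m₂) :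
    W d m₁ m₂ ≤ ∑ p : V × V, A p * d p.1 p.2 := by
  refine csInf_le ⟨0, ?_⟩ ⟨A, hA, rfl⟩
  rintro _ ⟨B, hB, rfl⟩
  exact sum_nonneg fun p _ => mul_nonneg (hB.1 p) (hd _ _)

lemma le_mul_W_add {c e l : ℝ} (hl : 0 ≤ l) (hne : ∃ A, IsCoupling A m₁ m₂)
    (h : ∀ A, IsCoupling A m₁ m₂ → c ≤ l * ∑ p : V × V, A p * d p.1 p.2 + e) :
    c ≤ l * W d m₁ m₂ + e := by
  obtain ⟨A, hA⟩ := hne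
  rcases hl.eq_or_lt with rfl | hl
  · simpa using h A hA
  have hW : (c - e) / l ≤ W d m₁ m₂ := by
    refine le_csInf ⟨_, A, hA, rfl⟩ ?_
    rintro _ ⟨B, hB, rfl⟩
    rw [div_le_iff₀' hl]
    linarith [h B hB]
  rw [div_le_iff₀' hl] at hW
  linarith

lemma W_convexComb_le (hd : ∀ a b, 0 ≤ d a b) {n₁ n₂ : V → ℝ} {l : ℝ} (hl₀ : 0 ≤ l)
    (hl₁ : l ≤ 1) (hm : ∃ A, IsCoupling A m₁ m₂) (hn : ∃ B, IsCoupling B n₁ n₂) :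
    W d (fun x => l * m₁ x + (1 - l) * n₁ x) (fun y => l * m₂ y + (1 - l) * n₂ y)
      ≤ l * W d m₁ m₂ + (1 - l) * W d n₁ n₂ := by
  refine le_mul_W_add hl₀ hm fun A hA => ?_
  rw [add_comm]
  refine le_mul_W_add (sub_nonneg.2 hl₁) hn fun B hB => ?_
  calc _ ≤ ∑ p : V × V, (l * A p + (1 - l) * B p) * d p.1 p.2 :=
        W_le_of_isCoupling hd (hA.convexComb hB hl₀ hl₁)
    _ = _ := by simp only [add_mul, mul_assoc, sum_add_distrib, ← mul_sum, add_comm]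

lemma W_single_le [DecidableEq V] (hd : ∀ a b, 0 ≤ d a b) (x y : V) :
    W d (Pi.single x 1) (Pi.single y 1) ≤ d x y :=
  (W_le_of_isCoupling hd ((isProbMeasure_single x).isCoupling_mul (isProbMeasure_single y))).trans
    (by simp [Fintype.sum_prod_type, Pi.single_apply])

lemma sub_le_W (hne : ∃ A, IsCoupling A m₁ m₂) {f : V → ℝ} (hf : ∀ a b, f b - f a ≤ d a b) :
    ∑ v, m₂ v * f v - ∑ v, m₁ v * f v ≤ W d m₁ m₂ := by
  obtain ⟨A₀, hA₀⟩ := hne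
  refine le_csInf ⟨_, A₀, hA₀, rfl⟩ ?_
  rintro _ ⟨A, hA, rfl⟩
  calc ∑ v, m₂ v * f v - ∑ v, m₁ v * f v = ∑ p : V × V, A p * (f p.2 - f p.1) := by
        rw [← hA.sum_mul_snd, ← hA.sum_mul_fst, ← sum_sub_distrib]
        simp only [mul_sub]
    _ ≤ _ := sum_le_sum fun p _ => mul_le_mul_of_nonneg_left (hf _ _) (hA.1 p)

end Transport

lemma SimpleGraph.Connected.dist_sub_dist_le {V : Type*} {G : SimpleGraph V} (hG : G.Connected)
    (w a b : V) : (G.dist w b : ℝ) - G.dist w a ≤ G.dist a b := by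
  rw [sub_le_iff_le_add']
  exact_mod_cast hG.dist_triangle

section LazyWalk

variable {V : Type*} [Fintype V] [DecidableEq V] (G : SimpleGraph V) [DecidableRel G.Adj]

lemma sum_lazyWalk_mul (α : ℝ) (z : V) (f : V → ℝ) :
    ∑ v, lazyWalk G α z v * f v
      = α * f z + (1 - α) / G.degree z * ∑ v ∈ G.neighborFinset z, f v := by
  have h : ∀ v, lazyWalk G α z v * f v
      = (if v = z then α * f v else 0) + if G.Adj z v then (1 - α) / G.degree z * f v else 0 := by
    intro v
    unfold lazyWalk
    by_cases hv : v = z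
    · subst hv; simp
    · simp [hv, ite_mul]
  simp only [h, sum_add_distrib, sum_ite_eq', mem_univ, if_true, ← sum_filter,
    SimpleGraph.neighborFinset_eq_filter, mul_sum]

variable {G}

lemma isProbMeasure_lazyWalk {α : ℝ} (h₀ : 0 ≤ α) (h₁ : α ≤ 1) {z : V} (hz : 0 < G.degree z) :
    IsProbMeasure (lazyWalk G α z) := by
  refine ⟨fun v => ?_, ?_⟩
  · unfold lazyWalk
    split_ifs
    exacts [h₀, div_nonneg (sub_nonneg.2 h₁) (Nat.cast_nonneg _), le_rfl]
  · have := sum_lazyWalk_mul G α z fun _ => 1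
    simp only [mul_one, sum_const, SimpleGraph.card_neighborFinset_eq_degree, nsmul_one] at this
    rw [this, div_mul_cancel₀ _ (by exact_mod_cast hz.ne')]
    ring

lemma exists_isCoupling_lazyWalk {α : ℝ} (h₀ : 0 ≤ α) (h₁ : α ≤ 1) {x y : V}
    (hx : 0 < G.degree x) (hy : 0 < G.degree y) :
    ∃ A, IsCoupling A (lazyWalk G α x) (lazyWalk G α y) :=
  ⟨_, (isProbMeasure_lazyWalk h₀ h₁ hx).isCoupling_mul (isProbMeasure_lazyWalk h₀ h₁ hy)⟩

lemma lazyWalk_eq_convexComb {α : ℝ} (hα : α ≠ 1) (β : ℝ) (x : V) :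
    lazyWalk G β x = fun v => (1 - β) / (1 - α) * lazyWalk G α x v
      + (1 - (1 - β) / (1 - α)) * (Pi.single x 1 : V → ℝ) v := by
  have hα' : (1 : ℝ) - α ≠ 0 := sub_ne_zero.2 (Ne.symm hα)
  ext v
  by_cases hv : v = x
  · subst hv
    simp only [lazyWalk, if_pos, Pi.single_eq_same]
    field_simp
    ring
  · by_cases hxv : G.Adj x v
    · simp [lazyWalk, hv, hxv]; field_simp
    · simp [lazyWalk, hv, hxv]

lemma sum_lazyWalk_mul_dist_self (α : ℝ) {z : V} (hz : 0 < G.degree z) :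
    ∑ v, lazyWalk G α z v * G.dist z v = 1 - α := by
  have hnbr : ∀ v ∈ G.neighborFinset z, (G.dist z v : ℝ) = 1 := fun v hv => by
    rw [SimpleGraph.dist_eq_one_iff_adj.2 ((G.mem_neighborFinset z v).1 hv), Nat.cast_one]
  rw [sum_lazyWalk_mul, sum_congr rfl hnbr, SimpleGraph.dist_self, sum_const,
    SimpleGraph.card_neighborFinset_eq_degree, nsmul_one, div_mul_cancel₀ _ (by exact_mod_cast hz.ne')]
  ring

lemma dist_sub_le_sum_lazyWalk_mul_dist (hG : G.Connected) {α : ℝ} (h₀ : 0 ≤ α) (h₁ : α ≤ 1)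
    (w : V) {z : V} (hz : 0 < G.degree z) :
    G.dist w z - (1 - α) ≤ ∑ v, lazyWalk G α z v * G.dist w v := by
  have hm := isProbMeasure_lazyWalk h₀ h₁ hz
  calc (G.dist w z : ℝ) - (1 - α) = ∑ v, lazyWalk G α z v * (G.dist w z - G.dist z v) := by
        rw [← sum_lazyWalk_mul_dist_self α hz]
        simp only [mul_sub, sum_sub_distrib, ← sum_mul, hm.2, one_mul]
    _ ≤ _ := sum_le_sum fun v _ => mul_le_mul_of_nonneg_left
        (by rw [SimpleGraph.dist_comm (u := z)]; linarith [hG.dist_sub_dist_le w v z]) (hm.1 v)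

lemma dist_sub_two_mul_le (hG : G.Connected) {α : ℝ} (h₀ : 0 ≤ α) (h₁ : α ≤ 1) (x y : V) :
    G.dist x y - 2 * (1 - α)
      ≤ ∑ v, lazyWalk G α y v * G.dist x v - ∑ v, lazyWalk G α x v * G.dist x v := by
  rcases eq_or_ne x y with rfl | hxy
  · simp only [SimpleGraph.dist_self, Nat.cast_zero, sub_self]
    linarith
  have hreach := hG.preconnected x y
  linarith [sum_lazyWalk_mul_dist_self α (hreach.degree_pos_left hxy),
    dist_sub_le_sum_lazyWalk_mul_dist hG h₀ h₁ x (hreach.degree_pos_right hxy)]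

end LazyWalk

section Curvature

variable {V : Type*} [Fintype V] [DecidableEq V] {G : SimpleGraph V} [DecidableRel G.Adj]

lemma kappaAlpha_le_of_adj {α : ℝ} (h₀ : 0 ≤ α) (h₁ : α ≤ 1) {u v : V} (huv : G.Adj u v)
    {f : V → ℝ} (hf : ∀ a b, f b - f a ≤ G.dist a b) :
    kappaAlpha G α u v ≤ 1 - (∑ x, lazyWalk G α v x * f x - ∑ x, lazyWalk G α u x * f x) := by
  have hW := sub_le_W (exists_isCoupling_lazyWalk h₀ h₁ huv.degree_pos_left
    huv.degree_pos_right) hf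
  rw [kappaAlpha, SimpleGraph.dist_eq_one_iff_adj.2 huv, Nat.cast_one, div_one]
  linarith

lemma kappaAlpha_div_le_two (hG : G.Connected) {α : ℝ} (h₀ : 0 ≤ α) (h₁ : α < 1) {x y : V}
    (hxy : G.Adj x y) : kappaAlpha G α x y / (1 - α) ≤ 2 := by
  rw [div_le_iff₀ (sub_pos.2 h₁)]
  have := dist_sub_two_mul_le hG h₀ h₁.le x y
  rw [SimpleGraph.dist_eq_one_iff_adj.2 hxy, Nat.cast_one] at this
  linarith [kappaAlpha_le_of_adj h₀ h₁.le hxy (hG.dist_sub_dist_le x)]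

-- `m^β_x` is a mixture of `m^α_x` and `δ_x` with weight `(1 - β) / (1 - α)`, and `W` is jointly
-- convex.
lemma mul_kappaAlpha_le {α β : ℝ} (hα : 0 ≤ α) (hαβ : α ≤ β) (hβ : β < 1) {x y : V}
    (hx : 0 < G.degree x) (hy : 0 < G.degree y) :
    (1 - β) / (1 - α) * kappaAlpha G α x y ≤ kappaAlpha G β x y := by
  set l := (1 - β) / (1 - α)
  have hl₀ : 0 ≤ l := div_nonneg (by linarith) (by linarith)
  have hl₁ : l ≤ 1 := (div_le_one (by linarith)).2 (by linarith)
  have hW := W_convexComb_le (fun a b => Nat.cast_nonneg (G.dist a b)) hl₀ hl₁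
    (exists_isCoupling_lazyWalk hα (by linarith) hx hy)
    ⟨_, (isProbMeasure_single x).isCoupling_mul (isProbMeasure_single y)⟩
  rw [← lazyWalk_eq_convexComb (by linarith), ← lazyWalk_eq_convexComb (by linarith)] at hW
  have hδ := mul_le_mul_of_nonneg_left
    (W_single_le (fun a b => Nat.cast_nonneg (G.dist a b)) x y) (sub_nonneg.2 hl₁)
  unfold kappaAlpha
  set Wα := W (fun a b => (G.dist a b : ℝ)) (lazyWalk G α x) (lazyWalk G α y)
  set Wβ := W (fun a b => (G.dist a b : ℝ)) (lazyWalk G β x) (lazyWalk G β y)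
  rcases (Nat.cast_nonneg (α := ℝ) (G.dist x y)).eq_or_lt with hd | hd
  · simp only [← hd, div_zero, sub_zero, mul_one, hl₁]
  have : Wβ / G.dist x y ≤ l * (Wα / G.dist x y) + (1 - l) := by
    rw [div_le_iff₀ hd, add_mul, mul_assoc, div_mul_cancel₀ _ hd.ne']
    linarith
  linarith

lemma monotoneOn_kappaAlpha_div {x y : V} (hx : 0 < G.degree x) (hy : 0 < G.degree y) :
    MonotoneOn (fun α => kappaAlpha G α x y / (1 - α)) (Set.Ico 0 1) := by
  intro α hα β hβ hαβ
  have h := mul_kappaAlpha_le hα.1 hαβ hβ.2 hx hy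
  rw [div_mul_eq_mul_div, div_le_iff₀ (sub_pos.2 hα.2)] at h
  rw [div_le_div_iff₀ (sub_pos.2 hα.2) (sub_pos.2 hβ.2)]
  linarith

-- `kappaLLY` is a `limUnder`, a junk value unless the limit exists; monotonicity and the bound
-- `2` make it exist.
lemma tendsto_kappaAlpha_div_kappaLLY (hG : G.Connected) {x y : V} (hxy : G.Adj x y) :
    Tendsto (fun α => kappaAlpha G α x y / (1 - α)) (𝓝[<] 1) (𝓝 (kappaLLY G x y)) := by
  have hmono := (monotoneOn_kappaAlpha_div hxy.degree_pos_left hxy.degree_pos_right).mono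
    Set.Ioo_subset_Ico_self
  have hbdd : BddAbove ((fun α => kappaAlpha G α x y / (1 - α)) '' Set.Ioo 0 1) :=
    ⟨2, Set.forall_mem_image.2 fun α hα => kappaAlpha_div_le_two hG hα.1.le hα.2 hxy⟩
  have h := hmono.tendsto_nhdsWithin_Ioo_left ⟨1 / 2, by norm_num⟩ hbdd
  rwa [kappaLLY, nhdsWithin_Ico_eq_nhdsLT one_pos, h.limUnder_eq]

lemma tendsto_IAlpha_div_ILLY (hG : G.Connected) (κ₀ : ℝ) :
    Tendsto (fun α => IAlpha G α κ₀ / (1 - α)) (𝓝[<] 1) (𝓝 (ILLY G κ₀)) := by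
  simp only [IAlpha, ILLY, sum_div]
  refine tendsto_finsetSum _ fun e he => ?_
  induction e using Sym2.ind with
  | _ u v =>
    have huv : G.Adj u v := G.mem_edgeFinset.1 he
    simp only [Sym2.lift_mk]
    refine (tendsto_const_nhds.max
      (tendsto_const_nhds.sub (tendsto_kappaAlpha_div_kappaLLY hG huv))).congr' ?_
    filter_upwards [self_mem_nhdsWithin] with α (hα : α < 1)
    rw [← max_div_div_right (sub_pos.2 hα).le, zero_div, sub_div,
      mul_div_cancel_left₀ _ (sub_pos.2 hα).ne']

end Curvature

section Walks

variable {V : Type*} [Fintype V] [DecidableEq V] {G : SimpleGraph V} [DecidableRel G.Adj]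

lemma SimpleGraph.Walk.IsTrail.sum_map_edges_le {a b : V} {p : G.Walk a b} (hp : p.IsTrail)
    {t : Sym2 V → ℝ} (ht : ∀ e ∈ G.edgeFinset, 0 ≤ t e) :
    (p.edges.map t).sum ≤ ∑ e ∈ G.edgeFinset, t e := by
  rw [← List.sum_toFinset t hp.edges_nodup]
  exact sum_le_sum_of_subset_of_nonneg
    (fun e he => G.mem_edgeFinset.2 (p.edges_subset_edgeSet (List.mem_toFinset.1 he)))
    fun e he _ => ht e he

lemma le_sum_edges_of_sub_kappaAlpha_le {α c : ℝ} (h₀ : 0 ≤ α) (h₁ : α ≤ 1) {f : V → ℝ}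
    (hf : ∀ a b, f b - f a ≤ G.dist a b) {t : Sym2 V → ℝ}
    (ht : ∀ x y, G.Adj x y → c - kappaAlpha G α x y ≤ t s(x, y)) {a b : V} (p : G.Walk a b) :
    p.length * (c - 1) + (∑ v, lazyWalk G α b v * f v - ∑ v, lazyWalk G α a v * f v)
      ≤ (p.edges.map t).sum := by
  induction p with
  | nil => simp
  | cons h q ih =>
    simp only [SimpleGraph.Walk.edges_cons, SimpleGraph.Walk.length_cons, List.map_cons,
      List.sum_cons, Nat.cast_succ]
    linarith [kappaAlpha_le_of_adj h₀ h₁ h hf, ht _ _ h]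

lemma dist_mul_sub_le_IAlpha (hG : G.Connected) (κ₀ : ℝ) {α : ℝ} (h₀ : 0 ≤ α) (h₁ : α ≤ 1)
    (x y : V) : G.dist x y * ((1 - α) * κ₀) - 2 * (1 - α) ≤ IAlpha G α κ₀ := by
  unfold IAlpha
  set t : Sym2 V → ℝ := Sym2.lift ⟨fun x y => max 0 ((1 - α) * κ₀ - kappaAlpha G α x y),
    fun x y => by simp only []; rw [kappaAlpha_symm]⟩
  obtain ⟨p, hp⟩ := hG.exists_walk_length_eq_dist x y
  have hwalk := le_sum_edges_of_sub_kappaAlpha_le h₀ h₁ (hG.dist_sub_dist_le x) (t := t)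
    (fun _ _ _ => le_max_right _ _) p
  have htrail := (p.isPath_of_length_eq_dist hp).isTrail.sum_map_edges_le (t := t)
    fun e _ => Sym2.ind (fun _ _ => le_max_left _ _) e
  rw [hp] at hwalk
  linarith [dist_sub_two_mul_le hG h₀ h₁ x y]

end Walks

/-- Bonnet–Myers-type estimate with integral Lin–Lu–Yau Ricci curvature. -/
theorem stmt_6 {V : Type*} [Fintype V] [DecidableEq V] (G : SimpleGraph V)
    [DecidableRel G.Adj] (hG : G.Connected) (κ₀ : ℝ) (hκ : 0 < κ₀) :
    (gDiam G : ℤ) ≤ ⌊(2 + ILLY G κ₀) / κ₀⌋ := by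
  have := hG.nonempty
  obtain ⟨⟨x, y⟩, -, hdiam⟩ :=
    exists_mem_eq_sup univ univ_nonempty fun p : V × V => G.dist p.1 p.2
  have hbound : (G.dist x y : ℝ) * κ₀ - 2 ≤ ILLY G κ₀ := by
    refine ge_of_tendsto (tendsto_IAlpha_div_ILLY hG κ₀) ?_
    filter_upwards [Ioo_mem_nhdsLT zero_lt_one] with α hα
    rw [le_div_iff₀ (sub_pos.2 hα.2)]
    linarith [dist_mul_sub_le_IAlpha hG κ₀ hα.1.le hα.2.le x y]
  rw [Int.le_floor, le_div_iff₀ hκ, gDiam, hdiam]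
  push_cast
  linarith
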